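/- arXiv:0712.1269 — 2 statements merged into one kernel-verified Lean document; each statement's English description precedes it below -/
import Mathlib

section
/- A nonempty good face of the graphical traveling salesman polyhedron P is uniquely determined by the set of Hamiltonian cycles it contains together with its set of feasible shortcuts: if F and G are nonempty good faces of P (each defined by a valid inequality) such that (i) for every Hamiltonian cycle C on V, χ^{E(C)} ∈ F if and only if χ^{E(C)} ∈ G, and (ii) for every rooted triangle (u,vw), s_{u,vw} ∈ direc F if and only if s_{u,vw} ∈ direc G, then F = G. -/
/-
Write `F = {a · x = α}` and `G = {b · x = β}`. By symmetry it suffices to show `F ⊆ G`, and as `F`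
is the convex hull of the connected Eulerian vectors it contains, it suffices to show that each of
them lies in `G`. Goodness makes `a` metric: an Eulerian vector of `F` using the edge `vw` stays
Eulerian after the detour `vw ↦ vu + uw`, so `a · s_{u,vw} ≤ 0`.

Now induct on the number of edges of an Eulerian multigraph `x ∈ F`. If every degree is two, `x`
is a Hamiltonian cycle and lies in `G` by (i). Otherwise some vertex `u` of degree at least four has
neighbours `v ≠ w` for which `x + s_{u,vw}` is again connected Eulerian, with one edge fewer.
Validity of `a` on `x + s_{u,vw}` and `a · s_{u,vw} ≤ 0` give `a · s_{u,vw} = 0`, so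
`x + s_{u,vw} ∈ F` and `s_{u,vw} ∈ direc F`; by (ii) `s_{u,vw} ∈ direc G`, so `b · s_{u,vw} = 0`
and `x ∈ G` follows from `x + s_{u,vw} ∈ G`.
-/

open scoped BigOperators

abbrev Edge (n : ℕ) := {e : Sym2 (Fin n) // ¬ e.IsDiag}

namespace TSP
variable {n : ℕ}
noncomputable section

def dot (a x : Edge n → ℝ) : ℝ := ∑ e, a e * x e
def ev (a : Edge n → ℝ) (u v : Fin n) : ℝ :=
  if h : u = v then 0 else a ⟨s(u, v), fun hd => h (Sym2.mk_isDiag_iff.mp hd)⟩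
def indic (u v : Fin n) : Edge n → ℝ := fun e => if e.val = s(u, v) then 1 else 0
def delta (u : Fin n) : Edge n → ℝ := fun e => if u ∈ e.val then 1/2 else 0
def RootedTri (u v w : Fin n) : Prop := v ≠ w ∧ u ≠ v ∧ u ≠ w
def tri (a : Edge n → ℝ) (u v w : Fin n) : ℝ := ev a v u + ev a u w - ev a v w
def IsMetric (a : Edge n → ℝ) : Prop := ∀ u v w, RootedTri u v w → 0 ≤ tri a u v w
def IsTT (a : Edge n → ℝ) : Prop :=
  IsMetric a ∧ ∀ u, ∃ v w, RootedTri u v w ∧ tri a u v w = 0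
def lam (a : Edge n → ℝ) (u : Fin n) : ℝ :=
  sInf {r | ∃ v w, RootedTri u v w ∧ r = tri a u v w}
def theta (a : Edge n → ℝ) : Edge n → ℝ := fun e => a e - ∑ u, lam a u * delta u e
def zvec (n : ℕ) : Edge n → ℝ := fun _ => 2 / ((n : ℝ) - 1)
def gamma (a : Edge n → ℝ) : ℝ := -1 + dot a (zvec n) - ∑ u, lam a u
def nextF (i : Fin n) : Fin n := ⟨(i.val + 1) % n, Nat.mod_lt _ i.pos⟩
def hamVec (σ : Equiv.Perm (Fin n)) : Edge n → ℝ :=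
  fun e => if ∃ i : Fin n, e.val = s(σ i, σ (nextF i)) then 1 else 0
def stsp (n : ℕ) : Set (Edge n → ℝ) :=
  convexHull ℝ {x | ∃ σ : Equiv.Perm (Fin n), x = hamVec σ}
def degree (x : Edge n → ℝ) (u : Fin n) : ℝ := ∑ e, if u ∈ e.val then x e else 0
lemma ev_symm (a : Edge n → ℝ) (u v : Fin n) : ev a u v = ev a v u := by
  unfold ev
  rcases eq_or_ne u v with h | h
  · subst h; simp
  · rw [dif_neg h, dif_neg (Ne.symm h)]
    congr 1
    exact Subtype.ext (Sym2.eq_swap)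
def supportGraph (x : Edge n → ℝ) : SimpleGraph (Fin n) where
  Adj u v := u ≠ v ∧ 0 < ev x u v
  symm := ⟨fun u v h => ⟨h.1.symm, by rw [ev_symm]; exact h.2⟩⟩
  loopless := ⟨fun u h => h.1 rfl⟩
def IsEulerian (x : Edge n → ℝ) : Prop :=
  (∀ e, ∃ m : ℕ, x e = m) ∧ (supportGraph x).Connected ∧
    ∀ u, ∃ m : ℕ, 0 < m ∧ degree x u = 2 * m
def gtsp (n : ℕ) : Set (Edge n → ℝ) := convexHull ℝ {x | IsEulerian x}
def IsFaceOf (Q F : Set (Edge n → ℝ)) : Prop :=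
  ∃ a α, (∀ x ∈ Q, α ≤ dot a x) ∧ F = {x ∈ Q | dot a x = α}
def IsGood (F : Set (Edge n → ℝ)) : Prop := ∀ e : Edge n, ∃ x ∈ F, 0 < x e
def adim (X : Set (Edge n → ℝ)) : ℕ := Module.finrank ℝ (affineSpan ℝ X).direction
def direc (F : Set (Edge n → ℝ)) : Submodule ℝ (Edge n → ℝ) :=
  Submodule.span ℝ {d | ∃ x ∈ F, ∃ y ∈ F, d = y - x}
def shortcut (u v w : Fin n) : Edge n → ℝ :=
  fun e => indic v w e - indic v u e - indic u w e
def gtspPolar (n : ℕ) : Set (Edge n → ℝ) := {b | ∀ x ∈ gtsp n, 1 ≤ dot b x}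

/-- The face of `S` defined by `a ∈ D_S`. -/
def faceS (a : Edge n → ℝ) : Set (Edge n → ℝ) :=
  {x ∈ stsp n | dot a x = dot a (zvec n) - 1}

/-- `D_S`: the points `a ∈ L` whose inequality `a·x ≥ a·z − 1` is valid for `S`
and defines a nonempty good face of `S`. -/
def DS (n : ℕ) : Set (Edge n → ℝ) :=
  {a | (∀ u, dot (delta u) a = 0) ∧
       (∀ x ∈ stsp n, dot a (zvec n) - 1 ≤ dot a x) ∧
       (faceS a).Nonempty ∧ IsGood (faceS a)}

/-- `D_P`: TT points of `P^△` defining nonempty good faces of `P`. -/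
def DP (n : ℕ) : Set (Edge n → ℝ) :=
  {b | b ∈ gtspPolar n ∧ IsTT b ∧
       ({x ∈ gtsp n | dot b x = 1}).Nonempty ∧ IsGood {x ∈ gtsp n | dot b x = 1}}

/-- `𝔉(a)`: faces of `P` definable by rotated versions of `a·x ≥ a·z − 1`. -/
def Frot (a : Edge n → ℝ) : Set (Set (Edge n → ℝ)) :=
  {F | ∃ ξ : Fin n → ℝ,
    (∀ x ∈ gtsp n,
      dot a (zvec n) - 1 + dot (∑ u, ξ u • delta u) (zvec n)
        ≤ dot (a + ∑ u, ξ u • delta u) x) ∧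
    F = {x ∈ gtsp n |
      dot (a + ∑ u, ξ u • delta u) x
        = dot a (zvec n) - 1 + dot (∑ u, ξ u • delta u) (zvec n)}}

/-- `E^u(a)`: the edges achieving the minimal triangle slack rooted at `u`. -/
def Eu (a : Edge n → ℝ) (u : Fin n) : Set (Edge n) :=
  {e | ∃ v w, RootedTri u v w ∧ e.val = s(v, w) ∧ tri a u v w = lam a u}

def IsFacetP (n : ℕ) (G : Set (Edge n → ℝ)) : Prop :=
  IsFaceOf (gtsp n) G ∧ adim G = n * (n - 1) / 2 - 1
def IsFacetS (n : ℕ) (F : Set (Edge n → ℝ)) : Prop :=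
  IsFaceOf (stsp n) F ∧ adim F + 1 = adim (stsp n)
def IsNRFacet (n : ℕ) (G : Set (Edge n → ℝ)) : Prop :=
  IsFacetP n G ∧ IsFacetS n (G ∩ stsp n)
def IsDegreeFacet (n : ℕ) (G : Set (Edge n → ℝ)) : Prop :=
  ∃ u, G = {x ∈ gtsp n | dot (delta u) x = 1}
def IsNonNegFacet (n : ℕ) (G : Set (Edge n → ℝ)) : Prop :=
  ∃ e : Edge n, G = {x ∈ gtsp n | x e = 0}
def IsNonNRFacet (n : ℕ) (G : Set (Edge n → ℝ)) : Prop :=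
  IsFacetP n G ∧ IsGood G ∧ ¬ IsDegreeFacet n G ∧
    adim (G ∩ stsp n) + 1 < adim (stsp n)

/-- Solution set of the relaxation `R_B` (degree inequalities). -/
def RBge {k : ℕ} (n : ℕ) (b : Fin k → Edge n → ℝ) : Set (Edge n → ℝ) :=
  {x | (∀ j, 1 ≤ dot (b j) x) ∧ (∀ v, 1 ≤ dot (delta v) x) ∧ ∀ e, 0 ≤ x e}

/-- Solution set of `R_B` with degree equations. -/
def RBeq {k : ℕ} (n : ℕ) (b : Fin k → Edge n → ℝ) : Set (Edge n → ℝ) :=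
  {x | (∀ j, 1 ≤ dot (b j) x) ∧ (∀ v, dot (delta v) x = 1) ∧ ∀ e, 0 ≤ x e}

/-- The parsimonious property of the relaxation `R_B`. -/
def Parsimonious {k : ℕ} (n : ℕ) (b : Fin k → Edge n → ℝ) : Prop :=
  ∀ c : Edge n → ℝ, IsMetric c →
    sInf (dot c '' RBge n b) = sInf (dot c '' RBeq n b)

/-- Adjacency in the ridge graph of `P`. -/
def RidgeAdj (n : ℕ) (F G : Set (Edge n → ℝ)) : Prop :=
  IsFacetP n F ∧ IsFacetP n G ∧ F ≠ G ∧ adim (F ∩ G) = n * (n - 1) / 2 - 2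

/-- `q_I = Σ_{u ∉ I} δ_u`. -/
def qI (n : ℕ) (I : Finset (Fin n)) : Edge n → ℝ := ∑ u ∈ Iᶜ, delta u

/-- The face `G_I` of `P`. -/
def GI (n : ℕ) (a : Edge n → ℝ) (I : Finset (Fin n)) : Set (Edge n → ℝ) :=
  {x ∈ gtsp n | dot (theta a + qI n I) x = gamma a + dot (qI n I) (zvec n)}

end

open Finset SimpleGraph

section Graph

variable {V : Type*} {G H : SimpleGraph V}

lemma _root_.SimpleGraph.Connected.of_forall_adj_reachable (hG : G.Connected)
    (h : ∀ v w, G.Adj v w → H.Reachable v w) : H.Connected := by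
  have hreach {v w : V} (hvw : G.Reachable v w) : H.Reachable v w := by
    obtain ⟨p⟩ := hvw
    induction p with
    | nil => rfl
    | cons hadj _ ih => exact (h _ _ hadj).trans ih
  rw [connected_iff] at hG ⊢
  exact ⟨fun v w => hreach (hG.1 v w), hG.2⟩

lemma _root_.SimpleGraph.Walk.exists_adj_reachable_deleteIncidenceSet {u v : V}
    (p : G.Walk v u) (hvu : v ≠ u) : ∃ t, G.Adj u t ∧ (G.deleteIncidenceSet u).Reachable v t := by
  induction p with
  | nil => exact absurd rfl hvu
  | @cons a b c hab _ ih =>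
    by_cases hbc : b = c
    · subst hbc
      exact ⟨a, hab.symm, .rfl⟩
    · obtain ⟨t, hct, hbt⟩ := ih hbc
      exact ⟨t, hct, (deleteIncidenceSet_adj.mpr ⟨hab, hvu, hbc⟩).reachable.trans hbt⟩

lemma _root_.SimpleGraph.Connected.of_deleteIncidenceSet_le {u : V} (hG : G.Connected)
    (hle : G.deleteIncidenceSet u ≤ H) (hu : ∀ t, G.Adj u t → H.Reachable t u) :
    H.Connected := by
  have hreach (v : V) : H.Reachable v u := by
    by_cases hvu : v = u
    · exact hvu ▸ .rfl
    · obtain ⟨t, hut, hvt⟩ :=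
        (hG.preconnected v u).some.exists_adj_reachable_deleteIncidenceSet hvu
      exact (hvt.mono hle).trans (hu t hut)
  rw [connected_iff]
  exact ⟨fun v w => (hreach v).trans (hreach w).symm, ⟨u⟩⟩

lemma _root_.SimpleGraph.Connected.exists_adj_of_three_le_card [Fintype V] (hG : G.Connected)
    (hV : 3 ≤ Fintype.card V) (v w : V) : ∃ t, t ≠ v ∧ t ≠ w ∧ (G.Adj v t ∨ G.Adj w t) := by
  classical
  obtain ⟨t, ht⟩ : ∃ t, t ∉ ({v, w} : Finset V) := by
    by_contra! h
    have := card_le_card (fun t _ => h t : univ ⊆ {v, w})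
    have := card_le_two (a := v) (b := w)
    rw [card_univ] at *
    omega
  obtain ⟨d, -, hd, hd'⟩ := (hG.preconnected v t).some.exists_boundary_dart {v, w} (by simp)
    (by simpa using ht)
  simp only [Set.mem_insert_iff, Set.mem_singleton_iff, not_or] at hd hd'
  rcases hd with hd | hd
  · exact ⟨d.snd, hd'.1, hd'.2, .inl (hd ▸ d.adj)⟩
  · exact ⟨d.snd, hd'.1, hd'.2, .inr (hd ▸ d.adj)⟩

lemma _root_.SimpleGraph.Connected.exists_isCycle_toSubgraph_adj_iff [Finite V]
    (hG : G.Connected) (hcyc : G.IsCycles) {v : V} (hv : (G.neighborSet v).Nonempty) :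
    ∃ p : G.Walk v v, p.IsCycle ∧ (∀ w, w ∈ p.support) ∧
      ∀ a b, p.toSubgraph.Adj a b ↔ G.Adj a b := by
  classical
  have := Fintype.ofFinite V
  obtain ⟨p, hp, hverts⟩ :=
    hcyc.exists_cycle_toSubgraph_verts_eq_connectedComponentSupp (c := G.connectedComponentMk v)
      rfl hv
  have hmem (w : V) : w ∈ p.toSubgraph.verts := by
    rw [hverts, ConnectedComponent.mem_supp_iff, ConnectedComponent.eq]
    exact hG.preconnected w v
  exact ⟨p, hp, fun w => p.mem_verts_toSubgraph.mp (hmem w),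
    fun a b => hp.adj_toSubgraph_iff_of_isCycles hcyc (hmem a) b⟩

lemma _root_.SimpleGraph.Walk.IsCycle.exists_perm_toSubgraph_adj_iff
    {G : SimpleGraph (Fin n)} {v : Fin n} {p : G.Walk v v} (hp : p.IsCycle)
    (hsupp : ∀ w, w ∈ p.support) :
    ∃ σ : Equiv.Perm (Fin n), ∀ a b, p.toSubgraph.Adj a b ↔ ∃ i, s(a, b) = s(σ i, σ (nextF i)) := by
  have hn : 0 < n := v.pos
  have hlen : p.length ≤ n := by
    have := hp.isPath_tail.length_lt
    rw [Fintype.card_fin, ← Walk.length_tail_add_one hp.not_nil] at *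
    omega
  have hsurj : Function.Surjective fun i : Fin n => p.getVert i := by
    intro w
    obtain ⟨i, rfl, hi⟩ := Walk.mem_support_iff_exists_getVert.mp (hsupp w)
    rcases hi.lt_or_eq with hi | rfl
    · exact ⟨⟨i, by omega⟩, rfl⟩
    · exact ⟨⟨0, hn⟩, by simp⟩
  have hinj := Finite.injective_iff_surjective.mpr hsurj
  let σ := Equiv.ofBijective _ ⟨hinj, hsurj⟩
  have hlen' : p.length = n := by
    by_contra hne
    have h0 := congrArg Fin.val (hinj (a₁ := ⟨p.length, by omega⟩) (a₂ := ⟨0, hn⟩)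
      (by simp [Walk.getVert_length]))
    have := hp.three_le_length
    simp only at h0
    omega
  have hnext (i : Fin n) : σ (nextF i) = p.getVert (i + 1) := by
    show p.getVert ((i + 1) % n) = _
    by_cases hi : (i : ℕ) + 1 < n
    · rw [Nat.mod_eq_of_lt hi]
    · rw [show (i : ℕ) + 1 = n by omega, Nat.mod_self, p.getVert_zero,
        ← congrArg p.getVert hlen', p.getVert_length]
  refine ⟨σ, fun a b => ?_⟩
  rw [Walk.toSubgraph_adj_iff]
  constructor
  · rintro ⟨i, hi, hil⟩
    exact ⟨⟨i, by omega⟩, by rw [hnext]; exact hi.symm⟩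
  · rintro ⟨i, hi⟩
    exact ⟨i, by rw [← hnext]; exact hi.symm, by omega⟩

end Graph

lemma sep_convexHull_subset_convexHull_sep {E : Type*} [AddCommGroup E] [Module ℝ E]
    {S : Set E} {f : E → ℝ} (hf : IsLinearMap ℝ f) {α : ℝ} (hS : ∀ y ∈ S, α ≤ f y) :
    {x ∈ convexHull ℝ S | f x = α} ⊆ convexHull ℝ {y ∈ S | f y = α} := by
  classical
  rintro x ⟨hx, hfx⟩
  obtain ⟨ι, t, w, z, hw0, hw1, hzS, rfl⟩ := (convexHull_eq S).subset hx
  let φ := IsLinearMap.mk' f hf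
  have hsum : ∑ i ∈ t, w i * (f (z i) - α) = 0 := by
    have : f (t.centerMass w z) = ∑ i ∈ t, w i * f (z i) := by
      rw [centerMass_eq_of_sum_1 _ _ hw1]
      change φ _ = _
      rw [map_sum]
      exact sum_congr rfl fun i _ => map_smul φ (w i) (z i)
    simp only [mul_sub, sum_sub_distrib, ← sum_mul, hw1, ← this, hfx]
    ring
  have htight (i : ι) (hi : i ∈ t) (hwi : w i ≠ 0) : f (z i) = α := by
    have h0 := (sum_eq_zero_iff_of_nonneg fun j hj =>
      mul_nonneg (hw0 j hj) (sub_nonneg.mpr (hS _ (hzS j hj)))).mp hsum i hi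
    rcases mul_eq_zero.mp h0 with h | h
    · exact absurd h hwi
    · linarith
  rw [← centerMass_filter_ne_zero]
  refine centerMass_mem_convexHull _ (fun i hi => hw0 i (mem_filter.mp hi).1) ?_ fun i hi => ?_
  · rw [sum_filter_ne_zero, hw1]
    exact one_pos
  · obtain ⟨hi, hwi⟩ := mem_filter.mp hi
    exact ⟨hzS i hi, htight i hi hwi⟩

section Coordinates

def mkE {u v : Fin n} (h : u ≠ v) : Edge n :=
  ⟨s(u, v), fun hd => h (Sym2.mk_isDiag_iff.mp hd)⟩

lemma ev_of_ne (a : Edge n → ℝ) {u v : Fin n} (h : u ≠ v) : ev a u v = a (mkE h) :=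
  dif_neg h

lemma ev_self (a : Edge n → ℝ) (u : Fin n) : ev a u u = 0 :=
  dif_pos rfl

lemma ev_eq_of_mk_eq (a : Edge n → ℝ) {u v u' v' : Fin n} (h : s(u, v) = s(u', v')) :
    ev a u v = ev a u' v' := by
  rcases Sym2.eq_iff.mp h with ⟨rfl, rfl⟩ | ⟨rfl, rfl⟩
  · rfl
  · exact ev_symm a u v

lemma exists_ev_eq (e : Edge n) : ∃ u v, u ≠ v ∧ ∀ a : Edge n → ℝ, a e = ev a u v := by
  obtain ⟨⟨u, v⟩, he⟩ := e
  have huv : u ≠ v := fun h => he (Sym2.mk_isDiag_iff.mpr h)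
  exact ⟨u, v, huv, fun a => (ev_of_ne a huv).symm⟩

lemma ev_add (a b : Edge n → ℝ) (u v : Fin n) : ev (a + b) u v = ev a u v + ev b u v := by
  unfold ev; split_ifs <;> simp

lemma ev_sub (a b : Edge n → ℝ) (u v : Fin n) : ev (a - b) u v = ev a u v - ev b u v := by
  unfold ev; split_ifs <;> simp

lemma degree_add (x y : Edge n → ℝ) (u : Fin n) :
    degree (x + y) u = degree x u + degree y u := by
  simp only [degree, ← sum_add_distrib]
  exact sum_congr rfl fun e _ => by split_ifs <;> simp

lemma degree_sub (x y : Edge n → ℝ) (u : Fin n) :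
    degree (x - y) u = degree x u - degree y u := by
  simp only [degree, ← sum_sub_distrib]
  exact sum_congr rfl fun e _ => by split_ifs <;> simp

lemma degree_eq_sum_ev (x : Edge n → ℝ) (u : Fin n) : degree x u = ∑ v, ev x u v := by
  classical
  have other_ne {e : Edge n} (he : u ∈ e.val) : Sym2.Mem.other' he ≠ u := fun h =>
    e.prop (by rw [← Sym2.other_spec' he, h]; exact Sym2.mk_isDiag_iff.mpr rfl)
  have mkE_other {e : Edge n} (he : u ∈ e.val) : mkE (other_ne he).symm = e :=
    Subtype.ext (Sym2.other_spec' he)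
  rw [degree, ← sum_filter, ← sum_erase univ (ev_self x u)]
  refine sum_bij' (fun e he => Sym2.Mem.other' (mem_filter.mp he).2)
    (fun v hv => mkE (ne_of_mem_erase hv).symm) (fun e he => ?_) (fun v _ => ?_)
    (fun e he => mkE_other _) (fun v _ => ?_) (fun e he => ?_)
  · exact mem_erase.mpr ⟨other_ne _, mem_univ _⟩
  · simp [mkE]
  · exact Sym2.congr_right.mp (Sym2.other_spec' _)
  · rw [ev_of_ne x (other_ne _).symm, mkE_other]

lemma sum_indic {p q : Fin n} (h : p ≠ q) : ∑ e, indic p q e = (1 : ℝ) := by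
  rw [sum_eq_single (mkE h)]
  · simp [indic, mkE]
  · intro e _ he
    have : e.val ≠ s(p, q) := fun h' => he (Subtype.ext h')
    simp [indic, this]
  · simp

lemma degree_indic {p q : Fin n} (h : p ≠ q) (v : Fin n) :
    degree (indic p q) v = if v = p ∨ v = q then 1 else 0 := by
  rw [degree, sum_eq_single (mkE h)]
  · simp [indic, mkE]
  · intro e _ he
    have : e.val ≠ s(p, q) := fun h' => he (Subtype.ext h')
    simp [indic, this]
  · simp

lemma isLinearMap_dot (a : Edge n → ℝ) : IsLinearMap ℝ (dot a) :=
  ⟨dotProduct_add a, fun c x => dotProduct_smul c a x⟩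

lemma dot_add (a x y : Edge n → ℝ) : dot a (x + y) = dot a x + dot a y := dotProduct_add a x y

lemma dot_sub (a x y : Edge n → ℝ) : dot a (x - y) = dot a x - dot a y := dotProduct_sub a x y

end Coordinates

section Shortcut

variable {u p q : Fin n}

lemma ev_shortcut (h : RootedTri u p q) (a b : Fin n) :
    ev (shortcut u p q) a b = (if s(a, b) = s(p, q) then 1 else 0)
      - (if s(a, b) = s(p, u) then 1 else 0) - (if s(a, b) = s(u, q) then 1 else 0) := by
  obtain ⟨hpq, hup, huq⟩ := h
  by_cases hab : a = b
  · subst hab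
    simp only [ev_self, Sym2.eq_iff]
    split_ifs <;> grind
  · exact ev_of_ne _ hab

lemma ev_shortcut_base (h : RootedTri u p q) : ev (shortcut u p q) p q = 1 := by
  rw [ev_shortcut h]
  obtain ⟨hpq, hup, huq⟩ := h
  simp only [Sym2.eq_iff]
  split_ifs <;> grind

lemma ev_shortcut_root (h : RootedTri u p q) (v : Fin n) :
    ev (shortcut u p q) v u = -(if v = p then 1 else 0) - (if v = q then 1 else 0) := by
  rw [ev_shortcut h]
  obtain ⟨hpq, hup, huq⟩ := h
  simp only [Sym2.eq_iff]
  split_ifs <;> grind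

lemma ev_shortcut_left (h : RootedTri u p q) : ev (shortcut u p q) p u = -1 := by
  rw [ev_shortcut_root h, if_pos rfl, if_neg h.1]
  norm_num

lemma ev_shortcut_right (h : RootedTri u p q) : ev (shortcut u p q) u q = -1 := by
  rw [ev_symm, ev_shortcut_root h, if_neg h.1.symm, if_pos rfl]
  norm_num

lemma ev_shortcut_nonpos (h : RootedTri u p q) {a b : Fin n} (hab : s(a, b) ≠ s(p, q)) :
    ev (shortcut u p q) a b ≤ 0 := by
  rw [ev_shortcut h, if_neg hab]
  split_ifs <;> norm_num

lemma ev_shortcut_nonneg (h : RootedTri u p q) {a b : Fin n} (hpu : s(a, b) ≠ s(p, u))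
    (huq : s(a, b) ≠ s(u, q)) : 0 ≤ ev (shortcut u p q) a b := by
  rw [ev_shortcut h, if_neg hpu, if_neg huq]
  split_ifs <;> norm_num

lemma exists_int_shortcut (u p q : Fin n) (e : Edge n) : ∃ k : ℤ, shortcut u p q e = k :=
  ⟨(if e.val = s(p, q) then 1 else 0) - (if e.val = s(p, u) then 1 else 0)
    - (if e.val = s(u, q) then 1 else 0), by simp only [shortcut, indic]; push_cast; rfl⟩

lemma degree_shortcut (h : RootedTri u p q) (v : Fin n) :
    degree (shortcut u p q) v = if v = u then -2 else 0 := by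
  obtain ⟨hpq, hup, huq⟩ := h
  have : shortcut u p q = indic p q - indic p u - indic u q := rfl
  rw [this, degree_sub, degree_sub, degree_indic hpq, degree_indic hup.symm, degree_indic huq]
  split_ifs <;> grind

lemma sum_shortcut (h : RootedTri u p q) : ∑ e, shortcut u p q e = (-1 : ℝ) := by
  simp only [shortcut, sum_sub_distrib, sum_indic h.1, sum_indic h.2.1.symm, sum_indic h.2.2]
  norm_num

end Shortcut

noncomputable def castVec (m : Edge n → ℕ) : Edge n → ℝ := fun e => m e

def mult (m : Edge n → ℕ) (u v : Fin n) : ℕ := if h : u = v then 0 else m (mkE h)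

def multDeg (m : Edge n → ℕ) (u : Fin n) : ℕ := ∑ v, mult m u v

section Multigraph

variable {m : Edge n → ℕ}

lemma mult_self (m : Edge n → ℕ) (u : Fin n) : mult m u u = 0 := dif_pos rfl

lemma ne_of_mult_pos {u v : Fin n} (h : 0 < mult m u v) : u ≠ v := by
  rintro rfl
  simp [mult_self] at h

lemma ev_castVec (m : Edge n → ℕ) (u v : Fin n) : ev (castVec m) u v = mult m u v := by
  unfold mult
  split_ifs with h
  · subst h; simp [ev_self]
  · rw [ev_of_ne _ h]; rfl

lemma mult_comm (m : Edge n → ℕ) (u v : Fin n) : mult m u v = mult m v u := by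
  exact_mod_cast (ev_castVec m u v).symm.trans ((ev_symm _ u v).trans (ev_castVec m v u))

lemma degree_castVec (m : Edge n → ℕ) (u : Fin n) : degree (castVec m) u = multDeg m u := by
  simp [degree_eq_sum_ev, ev_castVec, multDeg]

lemma supportGraph_castVec_adj {u v : Fin n} :
    (supportGraph (castVec m)).Adj u v ↔ 0 < mult m u v := by
  refine ⟨fun h => by exact_mod_cast (ev_castVec m u v) ▸ h.2, fun h => ⟨ne_of_mult_pos h, ?_⟩⟩
  rw [ev_castVec]
  exact_mod_cast h

lemma mult_le_multDeg (m : Edge n → ℕ) (u v : Fin n) : mult m u v ≤ multDeg m u :=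
  single_le_sum (f := mult m u) (fun _ _ => Nat.zero_le _) (mem_univ v)

lemma mult_add_mult_le_multDeg (m : Edge n → ℕ) {v w t : Fin n} (hwt : w ≠ t) :
    mult m v w + mult m v t ≤ multDeg m v :=
  sum_pair (f := mult m v) hwt ▸ sum_le_sum_of_subset (subset_univ _)

lemma multDeg_eq_sum_mult_of_forall_mem {u : Fin n} {C : Finset (Fin n)}
    (hC : ∀ t, 0 < mult m u t → t ∈ C) : multDeg m u = ∑ v ∈ C, mult m v u := by
  rw [multDeg, ← sum_subset (subset_univ C) fun v _ hv => ?_]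
  · exact sum_congr rfl fun v _ => mult_comm m u v
  · by_contra h
    exact hv (hC v (Nat.pos_of_ne_zero h))

lemma exists_mult_pos_of_multDeg_ne_zero {u : Fin n} (hu : multDeg m u ≠ 0) :
    ∃ w, 0 < mult m u w := by
  obtain ⟨w, -, hw⟩ := exists_ne_zero_of_sum_ne_zero hu
  exact ⟨w, Nat.pos_of_ne_zero hw⟩

lemma even_sum_sum_mult (m : Edge n → ℕ) (C : Finset (Fin n)) :
    Even (∑ v ∈ C, ∑ w ∈ C, mult m v w) := by
  rw [← sum_product', ← ZMod.natCast_eq_zero_iff_even]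
  push_cast
  refine sum_involution (fun x _ => x.swap) (fun x _ => ?_) (fun x _ hx hswap => ?_)
    (fun x hx => mem_product.mpr ⟨(mem_product.mp hx).2, (mem_product.mp hx).1⟩) (fun x _ => rfl)
  · rw [Prod.fst_swap, Prod.snd_swap, mult_comm, CharTwo.add_self_eq_zero]
  · have : x.2 = x.1 := congrArg Prod.fst hswap
    simp [this, mult_self] at hx

/-- The degrees in `C` count each edge inside `C` twice. -/
lemma even_sum_mult_of_forall_mult_eq_zero (hm : ∀ v, Even (multDeg m v)) {u : Fin n}
    {C : Finset (Fin n)} (hu : u ∉ C) (hC : ∀ v ∈ C, ∀ w ∉ C, w ≠ u → mult m v w = 0) :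
    Even (∑ v ∈ C, mult m v u) := by
  have hsplit (v : Fin n) (hv : v ∈ C) : multDeg m v = ∑ w ∈ C, mult m v w + mult m v u := by
    rw [multDeg, ← sum_add_sum_compl C, sum_eq_single_of_mem u (mem_compl.mpr hu)]
    exact fun w hw hwu => hC v hv w (mem_compl.mp hw) hwu
  have hdeg : Even (∑ v ∈ C, multDeg m v) := even_sum _ fun v _ => hm v
  rw [sum_congr rfl hsplit, sum_add_distrib] at hdeg
  exact (Nat.even_add.mp hdeg).mp (even_sum_sum_mult m C)

lemma IsEulerian.exists_eq_castVec {x : Edge n → ℝ} (hx : IsEulerian x) :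
    ∃ m : Edge n → ℕ, x = castVec m :=
  ⟨fun e => (hx.1 e).choose, funext fun e => (hx.1 e).choose_spec⟩

lemma IsEulerian.exists_multDeg_eq (hm : IsEulerian (castVec m)) (u : Fin n) :
    ∃ k, 0 < k ∧ multDeg m u = 2 * k := by
  obtain ⟨k, hk, hdeg⟩ := hm.2.2 u
  exact ⟨k, hk, by rw [degree_castVec] at hdeg; exact_mod_cast hdeg⟩

lemma sum_lt_sum_of_castVec_eq_add_shortcut {m' : Edge n → ℕ} {u p q : Fin n}
    (h : RootedTri u p q) (hm' : castVec m' = castVec m + shortcut u p q) :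
    ∑ e, m' e < ∑ e, m e := by
  have key : ((∑ e, m' e : ℕ) : ℝ) + 1 = (∑ e, m e : ℕ) := by
    have := congrArg (fun x => ∑ e, x e) hm'
    simp only [Pi.add_apply, sum_add_distrib, sum_shortcut h, castVec] at this
    push_cast
    linarith
  have : ∑ e, m' e + 1 = ∑ e, m e := by exact_mod_cast key
  omega

end Multigraph

section EulerianEdits

variable {x : Edge n → ℝ} {u p q : Fin n}

lemma IsEulerian.ev_nonneg (hx : IsEulerian x) (a b : Fin n) : 0 ≤ ev x a b := by
  by_cases hab : a = b
  · rw [hab, ev_self]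
  · obtain ⟨k, hk⟩ := hx.1 (mkE hab)
    rw [ev_of_ne x hab, hk]
    positivity

lemma IsEulerian.mem_gtsp (hx : IsEulerian x) : x ∈ gtsp n :=
  subset_convexHull ℝ _ hx

lemma exists_nat_add_of_nonneg {y : Edge n → ℝ} (hx : ∀ e, ∃ k : ℕ, x e = k)
    (hy : ∀ e, ∃ k : ℤ, y e = k) (hxy : ∀ a b, 0 ≤ ev (x + y) a b) (e : Edge n) :
    ∃ k : ℕ, (x + y) e = k := by
  obtain ⟨a, b, -, he⟩ := exists_ev_eq e
  obtain ⟨k, hk⟩ := hx e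
  obtain ⟨l, hl⟩ := hy e
  have h0 : 0 ≤ (k : ℤ) + l := by
    have := hxy a b
    rw [← he, Pi.add_apply, hk, hl] at this
    exact_mod_cast this
  refine ⟨(k + l : ℤ).toNat, ?_⟩
  rw [Pi.add_apply, hk, hl]
  exact_mod_cast (Int.toNat_of_nonneg h0).symm

lemma IsEulerian.sub_shortcut (hx : IsEulerian x) (h : RootedTri u p q) (hpq : 1 ≤ ev x p q) :
    IsEulerian (x - shortcut u p q) := by
  have hev (a b : Fin n) : ev (x - shortcut u p q) a b = ev x a b - ev (shortcut u p q) a b :=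
    ev_sub _ _ a b
  refine ⟨fun e => ?_, ?_, fun v => ?_⟩
  · rw [sub_eq_add_neg]
    refine exists_nat_add_of_nonneg hx.1 (fun e => ?_) (fun a b => ?_) e
    · obtain ⟨k, hk⟩ := exists_int_shortcut u p q e
      exact ⟨-k, by simp [hk]⟩
    · rw [← sub_eq_add_neg, hev]
      have := hx.ev_nonneg a b
      by_cases hab : s(a, b) = s(p, q)
      · rw [ev_eq_of_mk_eq x hab, ev_eq_of_mk_eq _ hab, ev_shortcut_base h]; linarith
      · linarith [ev_shortcut_nonpos h hab]
  · refine hx.2.1.of_forall_adj_reachable fun a b ⟨hab, hpos⟩ => ?_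
    by_cases habpq : s(a, b) = s(p, q)
    · have hpu : (supportGraph (x - shortcut u p q)).Adj p u :=
        ⟨h.2.1.symm, by rw [hev, ev_shortcut_left h]; linarith [hx.ev_nonneg p u]⟩
      have huq : (supportGraph (x - shortcut u p q)).Adj u q :=
        ⟨h.2.2, by rw [hev, ev_shortcut_right h]; linarith [hx.ev_nonneg u q]⟩
      rcases Sym2.eq_iff.mp habpq with ⟨rfl, rfl⟩ | ⟨rfl, rfl⟩
      · exact hpu.reachable.trans huq.reachable
      · exact (hpu.reachable.trans huq.reachable).symm
    · exact Adj.reachable ⟨hab, by rw [hev]; linarith [ev_shortcut_nonpos h habpq]⟩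
  · obtain ⟨k, hk, hdeg⟩ := hx.2.2 v
    rw [degree_sub, degree_shortcut h, hdeg]
    split_ifs
    · exact ⟨k + 1, by omega, by push_cast; ring⟩
    · exact ⟨k, hk, by ring⟩

lemma IsEulerian.add_shortcut (hx : IsEulerian x) (h : RootedTri u p q) (hpu : 1 ≤ ev x p u)
    (huq : 1 ≤ ev x u q) (hu : 4 ≤ degree x u)
    (hconn : (supportGraph (x + shortcut u p q)).Connected) :
    IsEulerian (x + shortcut u p q) := by
  refine ⟨exists_nat_add_of_nonneg hx.1 (exists_int_shortcut u p q) fun a b => ?_, hconn,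
    fun v => ?_⟩
  · rw [ev_add]
    have := hx.ev_nonneg a b
    by_cases h1 : s(a, b) = s(p, u)
    · rw [ev_eq_of_mk_eq x h1, ev_eq_of_mk_eq _ h1, ev_shortcut_left h]; linarith
    · by_cases h2 : s(a, b) = s(u, q)
      · rw [ev_eq_of_mk_eq x h2, ev_eq_of_mk_eq _ h2, ev_shortcut_right h]; linarith
      · linarith [ev_shortcut_nonneg h h1 h2]
  · obtain ⟨k, hk, hdeg⟩ := hx.2.2 v
    rw [degree_add, degree_shortcut h, hdeg]
    split_ifs with hv
    · subst hv
      have hk2 : 2 ≤ k := by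
        have : (4 : ℝ) ≤ 2 * k := hdeg ▸ hu
        exact_mod_cast (by linarith : (2 : ℝ) ≤ k)
      exact ⟨k - 1, by omega, by rw [Nat.cast_sub (by omega)]; push_cast; ring⟩
    · exact ⟨k, hk, by ring⟩

end EulerianEdits

section TwoRegular

variable {m : Edge n → ℕ}

lemma mult_le_one_of_multDeg_eq_two (hn : 3 ≤ n) (hm : IsEulerian (castVec m))
    (h2 : ∀ v, multDeg m v = 2) (v w : Fin n) : mult m v w ≤ 1 := by
  by_contra! h
  have no_other {a b : Fin n} (hab : 1 < mult m a b) {t : Fin n} (htb : t ≠ b) :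
      ¬ (supportGraph (castVec m)).Adj a t := by
    have := mult_add_mult_le_multDeg m htb.symm (v := a)
    rw [supportGraph_castVec_adj, h2 a] at *
    omega
  obtain ⟨t, htv, htw, hadj⟩ := hm.2.1.exists_adj_of_three_le_card (by simpa using hn) v w
  rcases hadj with hadj | hadj
  · exact no_other h htw hadj
  · exact no_other (mult_comm m v w ▸ h) htv hadj

lemma isCycles_supportGraph_castVec (hn : 3 ≤ n) (hm : IsEulerian (castVec m))
    (h2 : ∀ v, multDeg m v = 2) : (supportGraph (castVec m)).IsCycles := by
  classical
  intro v _
  have : (supportGraph (castVec m)).neighborSet v = ↑(univ.filter fun w => 0 < mult m v w) := by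
    ext w
    simp [supportGraph_castVec_adj]
  rw [this, Set.ncard_coe_finset, card_filter, ← h2 v, multDeg]
  exact sum_congr rfl fun w _ => by
    have := mult_le_one_of_multDeg_eq_two hn hm h2 v w
    split_ifs <;> omega

lemma exists_castVec_eq_hamVec (hn : 3 ≤ n) (hm : IsEulerian (castVec m))
    (h2 : ∀ v, multDeg m v = 2) : ∃ σ, castVec m = hamVec σ := by
  obtain ⟨w, hw⟩ := exists_mult_pos_of_multDeg_ne_zero (m := m) (u := ⟨0, by omega⟩) (by simp [h2])
  obtain ⟨c, hc, hsupp, hadj⟩ := hm.2.1.exists_isCycle_toSubgraph_adj_iff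
    (isCycles_supportGraph_castVec hn hm h2) ⟨w, supportGraph_castVec_adj.mpr hw⟩
  obtain ⟨σ, hσ⟩ := hc.exists_perm_toSubgraph_adj_iff hsupp
  refine ⟨σ, funext fun e => ?_⟩
  obtain ⟨a, b, hab, he⟩ := exists_ev_eq e
  rw [he (castVec m), he (hamVec σ), ev_castVec, ev_of_ne _ hab]
  show _ = if ∃ i, s(a, b) = s(σ i, σ (nextF i)) then 1 else 0
  simp only [← hσ, hadj, supportGraph_castVec_adj]
  have := mult_le_one_of_multDeg_eq_two hn hm h2 a b
  split_ifs <;> norm_cast <;> omega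

end TwoRegular

section Split

variable {m : Edge n → ℕ}

lemma exists_root_of_four_le_multDeg (hn : 3 ≤ n) (hm : IsEulerian (castVec m)) {u₀ : Fin n}
    (hu₀ : 4 ≤ multDeg m u₀) :
    ∃ u p q, 4 ≤ multDeg m u ∧ p ≠ q ∧ 0 < mult m u p ∧ 0 < mult m u q := by
  obtain ⟨y, hy⟩ := exists_mult_pos_of_multDeg_ne_zero (m := m) (u := u₀) (by omega)
  by_cases hz : ∃ z, z ≠ y ∧ 0 < mult m u₀ z
  · obtain ⟨z, hzy, hz⟩ := hz
    exact ⟨u₀, y, z, hu₀, hzy.symm, hy, hz⟩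
  push Not at hz
  -- all edges at `u₀` go to `y`, so `y` has degree at least four and another neighbour `t`
  have hdeg : multDeg m u₀ = mult m u₀ y :=
    sum_eq_single_of_mem y (mem_univ _) fun z _ hzy => Nat.le_zero.mp (hz z hzy)
  obtain ⟨t, htu, hty, hadj⟩ := hm.2.1.exists_adj_of_three_le_card (by simpa using hn) u₀ y
  simp only [supportGraph_castVec_adj] at hadj
  refine ⟨y, u₀, t, ?_, htu.symm, mult_comm m u₀ y ▸ hy, hadj.resolve_left ?_⟩
  · have := mult_le_multDeg m y u₀
    rw [mult_comm] at this
    omega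
  · exact fun h => absurd (hz t hty) (by omega)

lemma ev_castVec_add_shortcut (m : Edge n → ℕ) (u p q a b : Fin n) :
    ev (castVec m + shortcut u p q) a b = mult m a b + ev (shortcut u p q) a b := by
  rw [ev_add, ev_castVec]

lemma deleteIncidenceSet_le_supportGraph_add_shortcut {u p q : Fin n} (h : RootedTri u p q) :
    (supportGraph (castVec m)).deleteIncidenceSet u ≤
      supportGraph (castVec m + shortcut u p q) := by
  intro a b hab
  obtain ⟨⟨hne, hpos⟩, hau, hbu⟩ := deleteIncidenceSet_adj.mp hab
  refine ⟨hne, ?_⟩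
  rw [ev_add]
  have : 0 ≤ ev (shortcut u p q) a b := by
    refine ev_shortcut_nonneg h ?_ ?_ <;> rw [Ne, Sym2.eq_iff] <;> tauto
  linarith

/-- The component `C` of `p` in `G - u` is joined to `u` by an even, positive number of edges,
and by all `multDeg m u ≥ 4` of them if `q ∈ C`; so an edge from `C` to `u` survives the
shortcut. -/
lemma exists_reachable_ev_add_shortcut_pos (hm : IsEulerian (castVec m)) {u p q : Fin n}
    (h : RootedTri u p q) (hp : 0 < mult m u p) (hu : 4 ≤ multDeg m u)
    (hchoice : ¬ ((supportGraph (castVec m)).deleteIncidenceSet u).Reachable p q ∨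
      ∀ t, 0 < mult m u t → ((supportGraph (castVec m)).deleteIncidenceSet u).Reachable t p) :
    ∃ c, ((supportGraph (castVec m)).deleteIncidenceSet u).Reachable c p ∧
      0 < ev (castVec m + shortcut u p q) c u := by
  classical
  set H := (supportGraph (castVec m)).deleteIncidenceSet u
  set C := univ.filter fun v => v ≠ u ∧ H.Reachable v p
  have hpC : p ∈ C := by simp [C, h.2.1.symm]
  have hC : ∀ v ∈ C, ∀ w ∉ C, w ≠ u → mult m v w = 0 := by
    intro v hv w hw hwu
    by_contra hvw
    have hvw : H.Adj w v := deleteIncidenceSet_adj.mpr ⟨supportGraph_castVec_adj.mpr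
      (by rw [mult_comm]; omega), hwu, (mem_filter.mp hv).2.1⟩
    exact hw (mem_filter.mpr ⟨mem_univ _, hwu, hvw.reachable.trans (mem_filter.mp hv).2.2⟩)
  obtain ⟨k, hk⟩ := even_sum_mult_of_forall_mult_eq_zero
    (fun v => (hm.exists_multDeg_eq v).elim fun k hk => ⟨k, by omega⟩) (by simp [C]) hC
  have hpu : mult m p u ≤ ∑ v ∈ C, mult m v u :=
    single_le_sum (f := fun v => mult m v u) (fun _ _ => Nat.zero_le _) hpC
  have hlt : 1 + (if q ∈ C then 1 else 0) < ∑ v ∈ C, mult m v u := by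
    rw [mult_comm] at hpu
    split_ifs with hqC
    · have hall := hchoice.resolve_left (not_not.mpr (mem_filter.mp hqC).2.2.symm)
      have := multDeg_eq_sum_mult_of_forall_mem (C := C) fun t ht =>
        mem_filter.mpr ⟨mem_univ _, (ne_of_mult_pos ht).symm, hall t ht⟩
      omega
    · omega
  have hsum : 0 < ∑ v ∈ C, ev (castVec m + shortcut u p q) v u := by
    simp only [ev_castVec_add_shortcut, ev_shortcut_root h, sum_add_distrib, sum_sub_distrib,
      sum_neg_distrib, sum_ite_eq', if_pos hpC]
    have : (1 + (if q ∈ C then 1 else 0) : ℝ) < ∑ v ∈ C, (mult m v u : ℝ) := by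
      exact_mod_cast hlt
    linarith
  obtain ⟨c, hc, hcpos⟩ := exists_lt_of_sum_lt (f := fun _ => (0 : ℝ)) (by simpa using hsum)
  exact ⟨c, (mem_filter.mp hc).2.2, hcpos⟩

lemma connected_supportGraph_add_shortcut (hm : IsEulerian (castVec m)) {u p q : Fin n}
    (h : RootedTri u p q) (hp : 0 < mult m u p) (hu : 4 ≤ multDeg m u)
    (hchoice : ¬ ((supportGraph (castVec m)).deleteIncidenceSet u).Reachable p q ∨
      ∀ t, 0 < mult m u t → ((supportGraph (castVec m)).deleteIncidenceSet u).Reachable t p) :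
    (supportGraph (castVec m + shortcut u p q)).Connected := by
  set H := (supportGraph (castVec m)).deleteIncidenceSet u
  set G' := supportGraph (castVec m + shortcut u p q)
  have hle : H ≤ G' := deleteIncidenceSet_le_supportGraph_add_shortcut h
  have hpu : G'.Reachable p u := by
    obtain ⟨c, hcp, hc⟩ := exists_reachable_ev_add_shortcut_pos hm h hp hu hchoice
    have hcu : c ≠ u := by rintro rfl; simp [ev_self] at hc
    exact (hcp.mono hle).symm.trans (Adj.reachable ⟨hcu, hc⟩)
  have hpq : G'.Adj p q :=
    ⟨h.1, by rw [ev_castVec_add_shortcut, ev_shortcut_base h]; positivity⟩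
  refine hm.2.1.of_deleteIncidenceSet_le hle fun t ht => ?_
  by_cases htp : H.Reachable t p
  · exact (htp.mono hle).trans hpu
  by_cases htq : H.Reachable t q
  · exact (htq.mono hle).trans (hpq.symm.reachable.trans hpu)
  have htp' : t ≠ p := by rintro rfl; exact htp .rfl
  have htq' : t ≠ q := by rintro rfl; exact htq .rfl
  refine Adj.reachable ⟨ht.ne.symm, ?_⟩
  rw [ev_castVec_add_shortcut, ev_shortcut_root h, if_neg htp', if_neg htq', mult_comm]
  have := supportGraph_castVec_adj.mp ht
  simp only [neg_zero, sub_zero, add_zero]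
  exact_mod_cast this

lemma IsEulerian.exists_add_shortcut (hn : 3 ≤ n) (hm : IsEulerian (castVec m)) {u₀ : Fin n}
    (hu₀ : 4 ≤ multDeg m u₀) :
    ∃ u p q, RootedTri u p q ∧ IsEulerian (castVec m + shortcut u p q) := by
  obtain ⟨u, p₀, q₀, hu, hpq₀, hp₀, hq₀⟩ := exists_root_of_four_le_multDeg hn hm hu₀
  set H := (supportGraph (castVec m)).deleteIncidenceSet u
  -- either two neighbours of `u` lie in different components of `G - u`, or all lie in one
  obtain ⟨p, q, hpq, hp, hq, hchoice⟩ : ∃ p q, p ≠ q ∧ 0 < mult m u p ∧ 0 < mult m u q ∧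
      (¬ H.Reachable p q ∨ ∀ t, 0 < mult m u t → H.Reachable t p) := by
    by_cases hsep : ∃ p q, p ≠ q ∧ 0 < mult m u p ∧ 0 < mult m u q ∧ ¬ H.Reachable p q
    · obtain ⟨p, q, hpq, hp, hq, hpq'⟩ := hsep
      exact ⟨p, q, hpq, hp, hq, .inl hpq'⟩
    push Not at hsep
    refine ⟨p₀, q₀, hpq₀, hp₀, hq₀, .inr fun t ht => ?_⟩
    by_cases htp : t = p₀
    · exact htp ▸ .rfl
    · exact hsep t p₀ htp ht hp₀
  have h : RootedTri u p q := ⟨hpq, ne_of_mult_pos hp, ne_of_mult_pos hq⟩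
  refine ⟨u, p, q, h, hm.add_shortcut h ?_ ?_ ?_
    (connected_supportGraph_add_shortcut hm h hp hu hchoice)⟩
  · rw [ev_castVec, mult_comm]
    exact_mod_cast hp
  · rw [ev_castVec]
    exact_mod_cast hq
  · rw [degree_castVec]
    exact_mod_cast hu

end Split

def faceP (a : Edge n → ℝ) (α : ℝ) : Set (Edge n → ℝ) := {x ∈ gtsp n | dot a x = α}

lemma convex_faceP (a : Edge n → ℝ) (α : ℝ) : Convex ℝ (faceP a α) :=
  (convex_convexHull ℝ _).inter (convex_hyperplane (isLinearMap_dot a) α)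

section Faces

variable {a b : Edge n → ℝ} {α β : ℝ}

lemma faceP_subset_convexHull (hva : ∀ y ∈ gtsp n, α ≤ dot a y) :
    faceP a α ⊆ convexHull ℝ {y | IsEulerian y ∧ dot a y = α} :=
  sep_convexHull_subset_convexHull_sep (isLinearMap_dot a) fun y hy => hva y hy.mem_gtsp

lemma dot_eq_zero_of_mem_direc {S : Set (Edge n → ℝ)} (hS : ∀ z ∈ S, dot b z = β)
    {d : Edge n → ℝ} (hd : d ∈ direc S) : dot b d = 0 := by
  have : direc S ≤ LinearMap.ker (IsLinearMap.mk' _ (isLinearMap_dot b)) := by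
    refine Submodule.span_le.mpr ?_
    rintro _ ⟨x, hx, y, hy, rfl⟩
    simp [dot_sub, hS x hx, hS y hy]
  simpa using this hd

lemma exists_isEulerian_pos_of_isGood (hva : ∀ y ∈ gtsp n, α ≤ dot a y)
    (hgood : IsGood (faceP a α)) (e : Edge n) : ∃ y, IsEulerian y ∧ dot a y = α ∧ 0 < y e := by
  obtain ⟨x, hx, hxe⟩ := hgood e
  by_contra! h
  have hconv : Convex ℝ {z : Edge n → ℝ | z e ≤ 0} :=
    convex_halfSpace_le (LinearMap.proj e : (Edge n → ℝ) →ₗ[ℝ] ℝ).isLinear 0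
  have hsub : convexHull ℝ {y | IsEulerian y ∧ dot a y = α} ⊆ {z | z e ≤ 0} :=
    hconv.convexHull_subset_iff.mpr fun y hy => h y hy.1 hy.2
  exact (hsub (faceP_subset_convexHull hva hx)).not_gt hxe

lemma dot_shortcut_nonpos_of_isGood (hva : ∀ y ∈ gtsp n, α ≤ dot a y)
    (hgood : IsGood (faceP a α)) {u p q : Fin n} (h : RootedTri u p q) :
    dot a (shortcut u p q) ≤ 0 := by
  obtain ⟨y, hy, hya, hpos⟩ := exists_isEulerian_pos_of_isGood hva hgood (mkE h.1)
  have hpq : 1 ≤ ev y p q := by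
    obtain ⟨k, hk⟩ := hy.1 (mkE h.1)
    rw [hk] at hpos
    rw [ev_of_ne y h.1, hk]
    exact_mod_cast (by exact_mod_cast hpos : 0 < k)
  have := hva _ (hy.sub_shortcut h hpq).mem_gtsp
  rw [dot_sub, hya] at this
  linarith

lemma IsEulerian.mem_faceP (hn : 3 ≤ n) (hva : ∀ y ∈ gtsp n, α ≤ dot a y)
    (hmet : ∀ u p q, RootedTri u p q → dot a (shortcut u p q) ≤ 0)
    (hcyc : ∀ σ, hamVec σ ∈ faceP a α → hamVec σ ∈ faceP b β)
    (hsc : ∀ u p q, RootedTri u p q → shortcut u p q ∈ direc (faceP a α) →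
      shortcut u p q ∈ direc (faceP b β))
    {x : Edge n → ℝ} (hx : IsEulerian x) (hxF : x ∈ faceP a α) : x ∈ faceP b β := by
  obtain ⟨m, rfl⟩ := hx.exists_eq_castVec
  induction hT : ∑ e, m e using Nat.strong_induction_on generalizing m with
  | _ T ih =>
    by_cases hreg : ∀ v, multDeg m v = 2
    · obtain ⟨σ, hσ⟩ := exists_castVec_eq_hamVec hn hx hreg
      rw [hσ] at hxF ⊢
      exact hcyc σ hxF
    push Not at hreg
    obtain ⟨v, hv⟩ := hreg
    have hv4 : 4 ≤ multDeg m v := by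
      obtain ⟨k, hk, hdeg⟩ := hx.exists_multDeg_eq v
      omega
    obtain ⟨u, p, q, h, hx'⟩ := hx.exists_add_shortcut hn hv4
    have hs : dot a (shortcut u p q) = 0 := by
      have := hva _ hx'.mem_gtsp
      rw [dot_add, hxF.2] at this
      linarith [hmet u p q h]
    have hx'F : castVec m + shortcut u p q ∈ faceP a α :=
      ⟨hx'.mem_gtsp, by rw [dot_add, hxF.2, hs, add_zero]⟩
    have hsG := hsc u p q h
      (Submodule.subset_span ⟨_, hxF, _, hx'F, (add_sub_cancel_left _ _).symm⟩)
    obtain ⟨m', hm'⟩ := hx'.exists_eq_castVec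
    have hx'G := ih _ (hT ▸ sum_lt_sum_of_castVec_eq_add_shortcut h hm'.symm) m' (hm' ▸ hx')
      (hm' ▸ hx'F) rfl
    have hb := hx'G.2
    rw [← hm', dot_add, dot_eq_zero_of_mem_direc (fun z hz => hz.2) hsG, add_zero] at hb
    exact ⟨hx.mem_gtsp, hb⟩

lemma subset_of_isFaceOf (hn : 3 ≤ n) {F G : Set (Edge n → ℝ)} (hF : IsFaceOf (gtsp n) F)
    (hG : IsFaceOf (gtsp n) G) (hFgood : IsGood F) (hcyc : ∀ σ, hamVec σ ∈ F → hamVec σ ∈ G)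
    (hsc : ∀ u v w, RootedTri u v w → shortcut u v w ∈ direc F → shortcut u v w ∈ direc G) :
    F ⊆ G := by
  obtain ⟨a, α, hva, rfl⟩ := hF
  obtain ⟨b, β, -, rfl⟩ := hG
  have hmet (u p q : Fin n) (h : RootedTri u p q) := dot_shortcut_nonpos_of_isGood hva hFgood h
  refine (faceP_subset_convexHull hva).trans ((convex_faceP b β).convexHull_subset_iff.mpr ?_)
  exact fun y ⟨hy, hya⟩ => hy.mem_faceP hn hva hmet hcyc hsc ⟨hy.mem_gtsp, hya⟩

end Faces

theorem stmt11_general (n : ℕ) (hn : 5 ≤ n) (F G : Set (Edge n → ℝ))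
    (hF : IsFaceOf (gtsp n) F) (hG : IsFaceOf (gtsp n) G)
    (hFgood : IsGood F) (hGgood : IsGood G)
    (hcyc : ∀ σ : Equiv.Perm (Fin n), hamVec σ ∈ F ↔ hamVec σ ∈ G)
    (hsc : ∀ u v w : Fin n, RootedTri u v w →
      (shortcut u v w ∈ direc F ↔ shortcut u v w ∈ direc G)) :
    F = G :=
  (subset_of_isFaceOf (by omega) hF hG hFgood (fun σ => (hcyc σ).mp)
    fun u v w h => (hsc u v w h).mp).antisymm
  (subset_of_isFaceOf (by omega) hG hF hGgood (fun σ => (hcyc σ).mpr)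
    fun u v w h => (hsc u v w h).mpr)

/-- a nonempty good face of `P` is uniquely determined by its
Hamiltonian cycles and its feasible shortcuts. -/
theorem stmt11 (n : ℕ) (hn : 5 ≤ n) (F G : Set (Edge n → ℝ))
    (hF : IsFaceOf (gtsp n) F) (hG : IsFaceOf (gtsp n) G)
    (hFne : F.Nonempty) (hGne : G.Nonempty)
    (hFgood : IsGood F) (hGgood : IsGood G)
    (hcyc : ∀ σ : Equiv.Perm (Fin n), hamVec σ ∈ F ↔ hamVec σ ∈ G)
    (hsc : ∀ u v w : Fin n, RootedTri u v w →
      (shortcut u v w ∈ direc F ↔ shortcut u v w ∈ direc G)) :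
    F = G :=
  stmt11_general n hn F G hF hG hFgood hGgood hcyc hsc

end TSP
end

section
/- Let a, b ∈ L and η ≥ 0. If γ(a) = η·γ(b) and θ(a) = η·θ(b), then η = 1 and a = b. In particular, the map a ↦ θ(a)/γ(a) is injective on any subset of L on which γ is positive. -/
open scoped BigOperators

namespace TSP
variable {n : ℕ}
/-!
Since `δ_u · z = 1` for every `u`, subtracting `Σ_u λ_u δ_u` lowers `a · z` by exactly
`Σ_u λ_u`, so `θ(a) · z = γ(a) + 1`. Dotting `θ(a) = η θ(b)` with `z` and comparing with
`γ(a) = η γ(b)` therefore forces `η = 1`. Then `a - b = Σ_u (λ_u(a) - λ_u(b)) δ_u` lies both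
in `L` and in the span of the `δ_u`, i.e. in `L ∩ L^⊥`, so it vanishes.
-/

open Finset

/-- The subspace `L`. -/
def zeroDegree (n : ℕ) : Set (Edge n → ℝ) := {y | ∀ u, dot (delta u) y = 0}

variable {n : ℕ}

lemma dot_eq_dotProduct (a x : Edge n → ℝ) : dot a x = a ⬝ᵥ x := rfl

lemma card_filter_mem_edge (u : Fin n) : #{e : Edge n | u ∈ e.val} = n - 1 := by
  have h := (⊤ : SimpleGraph (Fin n)).card_incidenceFinset_eq_degree u
  rw [SimpleGraph.complete_graph_degree, Fintype.card_fin] at h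
  rw [← h, ← card_map (Function.Embedding.subtype _)]
  congr 1
  ext e
  simp [SimpleGraph.incidenceSet, and_comm]

lemma dot_delta_zvec (hn : 2 ≤ n) (u : Fin n) : dot (delta u) (zvec n) = 1 := by
  have hn' : (n : ℝ) - 1 ≠ 0 := by
    rw [sub_ne_zero]; exact_mod_cast (by omega : n ≠ 1)
  simp only [dot, delta, zvec, ite_mul, zero_mul, sum_ite, sum_const_zero, add_zero,
    sum_const, card_filter_mem_edge, nsmul_eq_mul, Nat.cast_sub (by omega : 1 ≤ n)]
  field_simp
  ring

lemma theta_eq_sub_sum (a : Edge n → ℝ) : theta a = a - ∑ u, lam a u • delta u := by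
  ext e
  simp [theta]

lemma dot_theta_zvec (hn : 2 ≤ n) (a : Edge n → ℝ) :
    dot (theta a) (zvec n) = gamma a + 1 := by
  rw [theta_eq_sub_sum, dot_eq_dotProduct, sub_dotProduct, sum_dotProduct]
  simp only [smul_dotProduct, ← dot_eq_dotProduct, dot_delta_zvec hn, smul_eq_mul, mul_one, gamma]
  ring

lemma eq_one_of_gamma_eq_mul_of_theta_eq_smul (hn : 2 ≤ n) {a b : Edge n → ℝ} {η : ℝ}
    (hγ : gamma a = η * gamma b) (hθ : theta a = η • theta b) : η = 1 := by
  have h : gamma a + 1 = η * (gamma b + 1) := by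
    rw [← dot_theta_zvec hn, ← dot_theta_zvec hn, hθ, dot_eq_dotProduct, dot_eq_dotProduct,
      smul_dotProduct, smul_eq_mul]
  linarith

lemma eq_zero_of_mem_zeroDegree_of_eq_sum_smul_delta {y : Edge n → ℝ} (hy : y ∈ zeroDegree n)
    (μ : Fin n → ℝ) (hμ : y = ∑ u, μ u • delta u) : y = 0 := by
  rw [← dotProduct_self_eq_zero]
  nth_rw 1 [hμ]
  simp only [sum_dotProduct, smul_dotProduct, ← dot_eq_dotProduct, hy _, smul_zero, sum_const_zero]

lemma theta_injOn : Set.InjOn theta (zeroDegree n) := by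
  intro a ha b hb h
  rw [← sub_eq_zero]
  refine eq_zero_of_mem_zeroDegree_of_eq_sum_smul_delta (fun u => ?_) (fun u => lam a u - lam b u) ?_
  · rw [dot_eq_dotProduct, dotProduct_sub, ← dot_eq_dotProduct, ← dot_eq_dotProduct, ha u, hb u,
      sub_zero]
  · rw [theta_eq_sub_sum, theta_eq_sub_sum, sub_eq_sub_iff_sub_eq_sub] at h
    simp only [sub_smul, sum_sub_distrib, h]

lemma gamma_inv_smul_theta_injOn (hn : 2 ≤ n) :
    Set.InjOn (fun c => (gamma c)⁻¹ • theta c) {c ∈ zeroDegree n | gamma c ≠ 0} := by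
  rintro c ⟨hc, hγc⟩ d ⟨hd, hγd⟩ (h : (gamma c)⁻¹ • theta c = (gamma d)⁻¹ • theta d)
  have hθ : theta c = (gamma c / gamma d) • theta d := by
    rw [div_eq_mul_inv, mul_smul, ← h, smul_inv_smul₀ hγc]
  have hγ : gamma c = gamma c / gamma d * gamma d := (div_mul_cancel₀ _ hγd).symm
  have hη := eq_one_of_gamma_eq_mul_of_theta_eq_smul hn hγ hθ
  rw [hη, one_smul] at hθ
  exact theta_injOn hc hd hθ

theorem stmt14_general (n : ℕ) (hn : 5 ≤ n) (a b : Edge n → ℝ) (η : ℝ)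
    (ha : ∀ u, dot (delta u) a = 0) (hb : ∀ u, dot (delta u) b = 0)
    (h1 : gamma a = η * gamma b) (h2 : theta a = η • theta b) :
    (η = 1 ∧ a = b) ∧
    ∀ T : Set (Edge n → ℝ), (∀ c ∈ T, ∀ u, dot (delta u) c = 0) →
      (∀ c ∈ T, 0 < gamma c) →
      Set.InjOn (fun c => (gamma c)⁻¹ • theta c) T := by
  have hη := eq_one_of_gamma_eq_mul_of_theta_eq_smul (by omega) h1 h2
  refine ⟨⟨hη, theta_injOn ha hb (by rw [h2, hη, one_smul])⟩, fun T hT hpos => ?_⟩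
  refine (gamma_inv_smul_theta_injOn (by omega)).mono ?_
  exact fun c hc => ⟨hT c hc, (hpos c hc).ne'⟩

/-- `(γ, θ)` is injective on `L` up to positive scaling; in
particular `a ↦ θ(a)/γ(a)` is injective where `γ > 0`. -/
theorem stmt14 (n : ℕ) (hn : 5 ≤ n) (a b : Edge n → ℝ) (η : ℝ)
    (ha : ∀ u, dot (delta u) a = 0) (hb : ∀ u, dot (delta u) b = 0)
    (hη : 0 ≤ η)
    (h1 : gamma a = η * gamma b) (h2 : theta a = η • theta b) :
    (η = 1 ∧ a = b) ∧
    ∀ T : Set (Edge n → ℝ), (∀ c ∈ T, ∀ u, dot (delta u) c = 0) →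
      (∀ c ∈ T, 0 < gamma c) →
      Set.InjOn (fun c => (gamma c)⁻¹ • theta c) T :=
  stmt14_general n hn a b η ha hb h1 h2

end TSP
end
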